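/- Let M = {x,y,z} with the symmetric function ρ given by ρ(x,y) = 1, ρ(y,z) = 2, ρ(z,x) = 5 and ρ vanishing on the diagonal (ρ violates the triangle inequality). Then the generalized minimal filling weight of (M,ρ) equals 4 while the minimal filling weight equals 5: the infimum of w(𝒢) over all generalized fillings 𝒢 of (M,ρ) whose type is a tree in which every vertex of degree 1 is boundary equals 4, and the infimum of w(𝒢) over all fillings (with nonnegative weights) equals 5. In particular the conclusion mf₋(M) = mf(M) can fail when ρ does not satisfy the triangle inequality. -/

import Mathlib

open scoped BigOperators

namespace MinFill

variable {V : Type*}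

/-- The total weight of a (generalized) weighted graph: the sum of the weights
of its edges. -/
noncomputable def graphWeight (G : SimpleGraph V) (w : Sym2 V → ℝ) : ℝ :=
  ∑ᶠ e ∈ G.edgeSet, w e

/-- The weight of a walk: the sum of the weights of its edges. -/
def walkWeight {G : SimpleGraph V} (w : Sym2 V → ℝ) {u v : V} (p : G.Walk u v) : ℝ :=
  (p.edges.map w).sum

/-- `dw G w u v` is the minimum over simple paths in `G` from `u` to `v` of the
sum of the weights of their edges. -/
noncomputable def dw (G : SimpleGraph V) (w : Sym2 V → ℝ) (u v : V) : ℝ :=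
  sInf {r : ℝ | ∃ p : G.Walk u v, p.IsPath ∧ walkWeight w p = r}

/-- The degree of a vertex: the number of edges incident to it. -/
noncomputable def deg (G : SimpleGraph V) (v : V) : ℕ :=
  (G.neighborSet v).ncard

/-- `ρ` is a pseudometric on the subset `M`: symmetric, nonnegative, vanishing
on the diagonal and satisfying the triangle inequality. -/
def IsPseudometricOn (M : Set V) (ρ : V → V → ℝ) : Prop :=
  (∀ p ∈ M, ∀ q ∈ M, ρ p q = ρ q p) ∧
  (∀ p ∈ M, ∀ q ∈ M, 0 ≤ ρ p q) ∧
  (∀ p ∈ M, ρ p p = 0) ∧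
  (∀ p ∈ M, ∀ q ∈ M, ∀ r ∈ M, ρ p r ≤ ρ p q + ρ q r)

/-- `(G, w)` is a generalized filling of `(M, ρ)` (with `M ⊆ V`): `G` is
connected (and joins `M`), and for all boundary points `p, q ∈ M` every simple
path in `G` from `p` to `q` has weight at least `ρ p q` (equivalently
`ρ p q ≤ d_w(p, q)`). -/
def IsGenFilling (G : SimpleGraph V) (w : Sym2 V → ℝ) (M : Set V) (ρ : V → V → ℝ) : Prop :=
  G.Connected ∧ ∀ p ∈ M, ∀ q ∈ M, ∀ γ : G.Walk p q, γ.IsPath → ρ p q ≤ walkWeight w γ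


/-- `ρ` is a pseudometric on the finite set `M`. -/
def IsPseudometric {M : Type*} (ρ : M → M → ℝ) : Prop :=
  (∀ p q, ρ p q = ρ q p) ∧ (∀ p q, 0 ≤ ρ p q) ∧ (∀ p, ρ p p = 0) ∧
    (∀ p q r, ρ p r ≤ ρ p q + ρ q r)

/-- `(G, w)` is a generalized filling of `(M, ρ)`, where the boundary `M` is
embedded into the vertex set via `ι`. -/
def IsGenFillingE {M V : Type*} (G : SimpleGraph V) (ι : M ↪ V) (w : Sym2 V → ℝ)
    (ρ : M → M → ℝ) : Prop :=
  G.Connected ∧ ∀ p q : M, ∀ γ : G.Walk (ι p) (ι q), γ.IsPath → ρ p q ≤ walkWeight w γ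

/-- The type `G` is a tree in which every vertex of degree 1 is boundary. -/
def GoodType {M V : Type*} (G : SimpleGraph V) (ι : M ↪ V) : Prop :=
  G.IsTree ∧ ∀ v : V, deg G v = 1 → v ∈ Set.range ι

/-- The generalized minimal filling weight `mf₋(M)`: the infimum of total
weight over all generalized fillings of `(M, ρ)` whose type is a tree in which
every vertex of degree 1 is boundary. -/
noncomputable def mfNeg (M : Type) [Fintype M] (ρ : M → M → ℝ) : ℝ :=
  sInf {r : ℝ | ∃ (V : Type) (_ : Fintype V) (G : SimpleGraph V) (ι : M ↪ V)
    (w : Sym2 V → ℝ),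
      IsGenFillingE G ι w ρ ∧ GoodType G ι ∧ r = graphWeight G w}

/-- The minimal filling weight `mf(M)`: the infimum of total weight over all
fillings of `(M, ρ)` (with nonnegative weight functions). -/
noncomputable def mf (M : Type) [Fintype M] (ρ : M → M → ℝ) : ℝ :=
  sInf {r : ℝ | ∃ (V : Type) (_ : Fintype V) (G : SimpleGraph V) (ι : M ↪ V)
    (w : Sym2 V → ℝ),
      IsGenFillingE G ι w ρ ∧ (∀ e ∈ G.edgeSet, 0 ≤ w e) ∧ r = graphWeight G w}

/-- The symmetric function of Example 3 on a three-point set, violating the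
triangle inequality: `ρ(x,y) = 1`, `ρ(y,z) = 2`, `ρ(z,x) = 5`. -/
noncomputable def exampleDist3 : Fin 3 → Fin 3 → ℝ := fun x y =>
  if x = y then 0
  else if (x = 0 ∧ y = 1) ∨ (x = 1 ∧ y = 0) then 1
  else if (x = 1 ∧ y = 2) ∨ (x = 2 ∧ y = 1) then 2
  else 5

/-! In a generalized filling whose type is a tree with only boundary leaves, every edge `e` lies on
exactly two of the three paths joining `x, y, z`: deleting `e` splits the tree into two sides,
and each side contains a leaf (an end of a longest path through `e`), hence a boundary point.
Adding the three filling inequalities gives `1 + 2 + 5 ≤ 2 w(G)`. With nonnegative weights the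
path from `x` to `z` alone forces `5 ≤ w(G)`. Both bounds are attained by a star with centre
joined to `x, y, z` by edges of weights `2, -1, 3`, resp. `3, 0, 2`. -/

end MinFill

namespace SimpleGraph

variable {V : Type*} {G : SimpleGraph V}

lemma Walk.reachable_deleteEdges_or {u v a b : V} (W : G.Walk a b)
    (hb : (G.deleteEdges {s(u, v)}).Reachable b u ∨ (G.deleteEdges {s(u, v)}).Reachable b v) :
    (G.deleteEdges {s(u, v)}).Reachable a u ∨ (G.deleteEdges {s(u, v)}).Reachable a v := by
  induction W with
  | nil => exact hb
  | @cons a c b hadj W ih =>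
    by_cases hcut : s(a, c) = s(u, v)
    · rcases Sym2.eq_iff.mp hcut with ⟨rfl, -⟩ | ⟨rfl, -⟩
      · exact .inl .rfl
      · exact .inr .rfl
    · have hadj' : (G.deleteEdges {s(u, v)}).Adj a c := by simp [hadj, hcut]
      exact (ih hb).imp hadj'.reachable.trans hadj'.reachable.trans

lemma IsTree.exists_cut (hG : G.IsTree) (e : Sym2 V) :
    ∃ S : Set V, ∀ ⦃p q : V⦄ (P : G.Walk p q), P.IsPath →
      (e ∈ P.edges ↔ Xor (p ∈ S) (q ∈ S)) := by
  induction e using Sym2.ind with | _ u v => ?_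
  set H := G.deleteEdges {s(u, v)}
  have hside : ∀ t, H.Reachable t u ∨ H.Reachable t v := fun t =>
    ((hG.connected t u).some).reachable_deleteEdges_or (.inl .rfl)
  refine ⟨{t | H.Reachable t u}, fun p q P hP => ?_⟩
  have hreach : H.Reachable p q ↔ (H.Reachable p u ↔ H.Reachable q u) := by
    refine ⟨fun h => ⟨h.symm.trans, h.trans⟩, fun h => ?_⟩
    by_cases hp : H.Reachable p u
    · exact hp.trans (h.mp hp).symm
    · have hq : ¬ H.Reachable q u := fun hq => hp (h.mpr hq)
      exact ((hside p).resolve_left hp).trans ((hside q).resolve_left hq).symm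
  have hmem : s(u, v) ∈ P.edges ↔ ¬ H.Reachable p q := by
    refine ⟨fun he hpq => ?_, P.mem_edges_of_not_reachable_deleteEdges⟩
    obtain ⟨W, hW⟩ := reachable_deleteEdges_iff_exists_walk.mp hpq
    classical
    have hPW : P = W.toPath :=
      congrArg Subtype.val ((hG.isAcyclic.subsingleton_path p q).elim ⟨P, hP⟩ W.toPath)
    exact hW (W.edges_toPath_subset_edges (hPW ▸ he))
  rw [hmem, hreach, xor_iff_not_iff]
  rfl

end SimpleGraph

namespace MinFill

open SimpleGraph

variable {V : Type*}

lemma deg_eq_one_of_forall_length_le {G : SimpleGraph V} (hG : G.IsAcyclic) {e : Sym2 V}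
    {a b : V} {P : G.Walk a b} (hP : P.IsPath) (he : e ∈ P.edges)
    (hmax : ∀ ⦃a' b' : V⦄ (Q : G.Walk a' b'), Q.IsPath → e ∈ Q.edges →
      Q.length ≤ P.length) :
    deg G a = 1 := by
  have hnil : ¬ P.Nil := Walk.edges_eq_nil.not.mp (List.ne_nil_of_mem he)
  rw [deg, Set.ncard_eq_one]
  refine ⟨P.snd, Set.eq_singleton_iff_unique_mem.mpr ⟨P.adj_snd hnil, fun c hc => ?_⟩⟩
  by_contra hne
  have hcP : c ∉ P.support := fun h => hne (hG.eq_snd_of_adj_start hP hc h)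
  have := hmax (P.cons hc.symm) (hP.cons hcP) (by simp [he])
  simp at this

lemma exists_isPath_mem_edges_deg_eq_one [Fintype V] {G : SimpleGraph V} (hG : G.IsAcyclic)
    {e : Sym2 V} (he : e ∈ G.edgeSet) :
    ∃ (a b : V) (P : G.Walk a b), P.IsPath ∧ e ∈ P.edges ∧ deg G a = 1 ∧ deg G b = 1 := by
  set L := {n | ∃ (a b : V) (P : G.Walk a b), P.IsPath ∧ e ∈ P.edges ∧ P.length = n}
  have hL : L.Finite := (Set.finite_lt_nat (Fintype.card V)).subset
    fun n ⟨_, _, P, hP, _, hn⟩ => hn ▸ hP.length_lt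
  have hL₀ : L.Nonempty := by
    induction e using Sym2.ind with | _ u v =>
    have huv : G.Adj u v := he
    exact ⟨1, u, v, .cons huv .nil, by simp [huv.ne], by simp, rfl⟩
  obtain ⟨_, ⟨a, b, P, hP, heP, rfl⟩, hmax⟩ := Set.exists_max_image L id hL hL₀
  have hmax' : ∀ ⦃a' b' : V⦄ (Q : G.Walk a' b'), Q.IsPath → e ∈ Q.edges →
      Q.length ≤ P.length := fun a' b' Q hQ heQ => hmax _ ⟨a', b', Q, hQ, heQ, rfl⟩
  refine ⟨a, b, P, hP, heP, deg_eq_one_of_forall_length_le hG hP heP hmax', ?_⟩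
  refine deg_eq_one_of_forall_length_le hG hP.reverse (by simpa using heP) ?_
  simpa using hmax'

lemma graphWeight_eq_sum {G : SimpleGraph V} (w : Sym2 V → ℝ) (hfin : G.edgeSet.Finite) :
    graphWeight G w = ∑ e ∈ hfin.toFinset, w e :=
  finsum_mem_eq_finite_toFinset_sum _ _

lemma walkWeight_eq_sum_ite [DecidableEq V] {G : SimpleGraph V} (w : Sym2 V → ℝ) {u v : V}
    {P : G.Walk u v} (hP : P.IsPath) (hfin : G.edgeSet.Finite) :
    walkWeight w P = ∑ e ∈ hfin.toFinset, if e ∈ P.edges then w e else 0 := by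
  have hfilter : {e ∈ hfin.toFinset | e ∈ P.edges} = P.edges.toFinset := by
    ext e
    simpa using fun he => P.edges_subset_edgeSet he
  rw [← Finset.sum_filter, hfilter, List.sum_toFinset w hP.edges_nodup]
  rfl

lemma walkWeight_le_graphWeight [Finite V] {G : SimpleGraph V} {w : Sym2 V → ℝ}
    (hw : ∀ e ∈ G.edgeSet, 0 ≤ w e) {u v : V} {P : G.Walk u v} (hP : P.IsPath) :
    walkWeight w P ≤ graphWeight G w := by
  classical
  have hfin : G.edgeSet.Finite := Set.toFinite _
  rw [walkWeight_eq_sum_ite w hP hfin, graphWeight_eq_sum w hfin]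
  refine Finset.sum_le_sum fun e he => ?_
  split_ifs
  · exact le_rfl
  · exact hw e (hfin.mem_toFinset.mp he)

lemma ite_mem_edges_add_add_eq_two_mul [Fintype V] [DecidableEq V] {G : SimpleGraph V}
    (hG : G.IsTree) {x y z : V} (hleaf : ∀ t, deg G t = 1 → t = x ∨ t = y ∨ t = z)
    {Pxy : G.Walk x y} {Pyz : G.Walk y z} {Pxz : G.Walk x z}
    (hxy : Pxy.IsPath) (hyz : Pyz.IsPath) (hxz : Pxz.IsPath) (w : Sym2 V → ℝ) {e : Sym2 V}
    (he : e ∈ G.edgeSet) :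
    ((if e ∈ Pxy.edges then w e else 0) + (if e ∈ Pyz.edges then w e else 0) +
      if e ∈ Pxz.edges then w e else 0) = 2 * w e := by
  obtain ⟨S, hS⟩ := hG.exists_cut e
  obtain ⟨a, b, P, hP, heP, ha, hb⟩ := exists_isPath_mem_edges_deg_eq_one hG.isAcyclic he
  have hsplit : ¬ ((x ∈ S ↔ y ∈ S) ∧ (y ∈ S ↔ z ∈ S)) := by
    have hab := (hS P hP).mp heP
    rw [xor_iff_not_iff] at hab
    rcases hleaf a ha with rfl | rfl | rfl <;> rcases hleaf b hb with rfl | rfl | rfl <;> tauto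
  classical
  simp only [hS Pxy hxy, hS Pyz hyz, hS Pxz hxz]
  by_cases x ∈ S <;> by_cases y ∈ S <;> by_cases z ∈ S <;> simp_all [Xor] <;> ring

lemma walkWeight_add_add_eq_two_mul [Fintype V] {G : SimpleGraph V} (hG : G.IsTree)
    {x y z : V} (hleaf : ∀ t, deg G t = 1 → t = x ∨ t = y ∨ t = z)
    {Pxy : G.Walk x y} {Pyz : G.Walk y z} {Pxz : G.Walk x z}
    (hxy : Pxy.IsPath) (hyz : Pyz.IsPath) (hxz : Pxz.IsPath) (w : Sym2 V → ℝ) :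
    walkWeight w Pxy + walkWeight w Pyz + walkWeight w Pxz = 2 * graphWeight G w := by
  classical
  have hfin : G.edgeSet.Finite := Set.toFinite _
  rw [walkWeight_eq_sum_ite w hxy hfin, walkWeight_eq_sum_ite w hyz hfin,
    walkWeight_eq_sum_ite w hxz hfin, graphWeight_eq_sum w hfin, Finset.mul_sum,
    ← Finset.sum_add_distrib, ← Finset.sum_add_distrib]
  exact Finset.sum_congr rfl fun e he =>
    ite_mem_edges_add_add_eq_two_mul hG hleaf hxy hyz hxz w (hfin.mem_toFinset.mp he)

section Filling

variable {M : Type*} {G : SimpleGraph V} {ι : M ↪ V} {w : Sym2 V → ℝ} {ρ : M → M → ℝ}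

lemma IsGenFillingE.add_add_le_two_mul_graphWeight [Fintype V]
    (hfill : IsGenFillingE G ι w ρ) (htype : GoodType G ι) {x y z : M}
    (hxyz : ∀ p, p = x ∨ p = y ∨ p = z) :
    ρ x y + ρ y z + ρ x z ≤ 2 * graphWeight G w := by
  obtain ⟨htree, hleaf⟩ := htype
  have hleaf' : ∀ t, deg G t = 1 → t = ι x ∨ t = ι y ∨ t = ι z := by
    intro t ht
    obtain ⟨p, rfl⟩ := hleaf t ht
    rcases hxyz p with rfl | rfl | rfl <;> simp
  obtain ⟨Pxy, hxy⟩ := htree.connected.exists_isPath (ι x) (ι y)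
  obtain ⟨Pyz, hyz⟩ := htree.connected.exists_isPath (ι y) (ι z)
  obtain ⟨Pxz, hxz⟩ := htree.connected.exists_isPath (ι x) (ι z)
  rw [← walkWeight_add_add_eq_two_mul htree hleaf' hxy hyz hxz w]
  gcongr
  · exact hfill.2 x y Pxy hxy
  · exact hfill.2 y z Pyz hyz
  · exact hfill.2 x z Pxz hxz

lemma IsGenFillingE.le_graphWeight [Finite V] (hfill : IsGenFillingE G ι w ρ)
    (hw : ∀ e ∈ G.edgeSet, 0 ≤ w e) (p q : M) : ρ p q ≤ graphWeight G w := by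
  obtain ⟨P, hP⟩ := hfill.1.exists_isPath (ι p) (ι q)
  exact (hfill.2 p q P hP).trans (walkWeight_le_graphWeight hw hP)

lemma isGenFillingE_of_isTree (hG : G.IsTree)
    (h : ∀ p q, ∃ γ : G.Walk (ι p) (ι q), γ.IsPath ∧ ρ p q ≤ walkWeight w γ) :
    IsGenFillingE G ι w ρ := by
  refine ⟨hG.connected, fun p q γ hγ => ?_⟩
  obtain ⟨γ', hγ', hρ⟩ := h p q
  have : γ = γ' := congrArg Subtype.val
    ((hG.isAcyclic.subsingleton_path (ι p) (ι q)).elim ⟨γ, hγ⟩ ⟨γ', hγ'⟩)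
  exact this ▸ hρ

end Filling

section Star

variable {M : Type*}

/-- With potential `c p` at the boundary vertex `some p` and `0` at the centre, the path from
`some p` to `some q` has weight `c p + c q`. -/
def starWeight (c : M → ℝ) : Sym2 (Option M) → ℝ :=
  Sym2.lift ⟨fun a b => a.elim 0 c + b.elim 0 c, fun _ _ => add_comm _ _⟩

lemma starWeight_nonneg {c : M → ℝ} (hc : ∀ p, 0 ≤ c p) (e : Sym2 (Option M)) :
    0 ≤ starWeight c e := by
  induction e using Sym2.ind with | _ a b =>
  cases a <;> cases b <;> simp [starWeight, hc, add_nonneg]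

lemma graphWeight_starWeight [Fintype M] (c : M → ℝ) :
    graphWeight (starGraph none) (starWeight c) = ∑ p, c p := by
  have hedges : (starGraph (none : Option M)).edgeSet = Set.range fun p => s(some p, none) := by
    ext e
    induction e using Sym2.ind with | _ a b =>
    cases a <;> cases b <;> simp [eq_comm]
  have hinj : Function.Injective fun p : M => s(some p, none) := fun p q h => by simpa using h
  rw [graphWeight, hedges, finsum_mem_range hinj, finsum_eq_sum_of_fintype]
  simp [starWeight]

lemma isGenFillingE_starGraph {ρ : M → M → ℝ} {c : M → ℝ} (hdiag : ∀ p, ρ p p ≤ 0)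
    (hoff : ∀ p q, p ≠ q → ρ p q ≤ c p + c q) :
    IsGenFillingE (starGraph none) Function.Embedding.some (starWeight c) ρ := by
  refine isGenFillingE_of_isTree (isTree_starGraph none) fun p q => ?_
  by_cases hpq : p = q
  · subst hpq
    exact ⟨.nil, .nil, by simpa [walkWeight] using hdiag p⟩
  · have h₁ : (starGraph none).Adj (Function.Embedding.some p) none := by simp
    have h₂ : (starGraph none).Adj none (Function.Embedding.some q) := by simp
    refine ⟨.cons h₁ (.cons h₂ .nil), by simp [hpq], ?_⟩
    simpa [walkWeight, starWeight] using hoff p q hpq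

lemma goodType_starGraph [Nontrivial M] :
    GoodType (starGraph (none : Option M)) Function.Embedding.some := by
  refine ⟨isTree_starGraph none, fun v hv => ?_⟩
  cases v with
  | some p => exact ⟨p, rfl⟩
  | none =>
    obtain ⟨a, b, hab⟩ := exists_pair_ne M
    obtain ⟨t, ht⟩ := Set.ncard_eq_one.mp hv
    have ha : some a ∈ (starGraph none).neighborSet none := by simp
    have hb : some b ∈ (starGraph none).neighborSet none := by simp
    rw [ht] at ha hb
    exact absurd (Option.some_injective _ (ha.trans hb.symm)) hab

end Star

lemma exampleDist3_self (p : Fin 3) : exampleDist3 p p = 0 := by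
  simp [exampleDist3]

lemma mfNeg_exampleDist3 : mfNeg (Fin 3) exampleDist3 = 4 := by
  refine IsLeast.csInf_eq ⟨⟨_, inferInstance, _, _, starWeight ![2, -1, 3],
    isGenFillingE_starGraph (fun p => (exampleDist3_self p).le) ?_, goodType_starGraph, ?_⟩, ?_⟩
  · norm_num +decide [Fin.forall_fin_succ, exampleDist3]
  · rw [graphWeight_starWeight, Fin.sum_univ_three]
    norm_num [Matrix.cons_val_two]
  · rintro r ⟨V, _, G, ι, w, hfill, htype, rfl⟩
    have := hfill.add_add_le_two_mul_graphWeight htype (x := 0) (y := 1) (z := 2) (by decide)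
    norm_num +decide [exampleDist3] at this
    linarith

lemma mf_exampleDist3 : mf (Fin 3) exampleDist3 = 5 := by
  refine IsLeast.csInf_eq ⟨⟨_, inferInstance, _, _, starWeight ![3, 0, 2],
    isGenFillingE_starGraph (fun p => (exampleDist3_self p).le) ?_,
    fun e _ => starWeight_nonneg ?_ e, ?_⟩, ?_⟩
  · norm_num +decide [Fin.forall_fin_succ, exampleDist3]
  · simp [Fin.forall_fin_succ]
  · rw [graphWeight_starWeight, Fin.sum_univ_three]
    norm_num [Matrix.cons_val_two]
  · rintro r ⟨V, _, G, ι, w, hfill, hw, rfl⟩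
    simpa +decide [exampleDist3] using hfill.le_graphWeight hw 0 2

/-- For the three-point space of Example 3 (where the
triangle inequality fails), the generalized minimal filling weight is `4`
while the minimal filling weight is `5`; in particular `mf₋(M) = mf(M)` can
fail without the triangle inequality. -/
theorem example_mfNeg_ne_mf :
    mfNeg (Fin 3) exampleDist3 = 4 ∧ mf (Fin 3) exampleDist3 = 5 :=
  ⟨mfNeg_exampleDist3, mf_exampleDist3⟩

end MinFill
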